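/- arXiv:2602.12404 — 3 statements merged into one kernel-verified Lean document; each statement's English description precedes it below -/
import Mathlib

section
/- In L one has τ(U − μ − λ + λμ) = g^{−1}Λ^{−1}ν^{−1}·(ν − ν^{−1} − Λ(g·ν^{−1} − g^{−1}·ν)). In particular, since g^{−1}Λ^{−1}ν^{−1} is a unit of L, the augmentation polynomial U − μ − λ + λμ of the unknot and the q = 1 limit ν − ν^{−1} − Λ(g·ν^{−1} − g^{−1}·ν) of the deformed Â-polynomial of the unknot generate the same ideal of L under the substitution τ. -/
/-!
STATEMENT 1: In `L = ℂ[ν^{±1}, Λ^{±1}, g^{±1}]` one has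
`τ(U − μ − λ + λμ) = g^{−1}Λ^{−1}ν^{−1}·(ν − ν^{−1} − Λ(g·ν^{−1} − g^{−1}·ν))`,
and hence these two elements generate the same ideal of `L`.

Here both the source `ℂ[μ^{±1}, λ^{±1}, U^{±1}]` and the target `L` are modeled as the
Laurent polynomial ring in three variables `AddMonoidAlgebra ℂ (Fin 3 →₀ ℤ)`, with
`μ = x₀, λ = x₁, U = x₂` in the source and `ν = x₀, Λ = x₁, g = x₂` in the target,
and `τ` is the ring homomorphism with `τ(μ) = ν^{−2}`, `τ(U) = g^{−2}`,
`τ(λ) = −g^{−1}Λ^{−1}`.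
-/

noncomputable section

/-- The Laurent polynomial ring in three variables over `ℂ`. -/
abbrev Laur3 : Type := AddMonoidAlgebra ℂ (Fin 3 →₀ ℤ)

/-- The Laurent monomial `xᵢ^e`. -/
def Xp (i : Fin 3) (e : ℤ) : Laur3 :=
  AddMonoidAlgebra.single (Finsupp.single i e) 1

lemma Xp_mul (i : Fin 3) (a b : ℤ) : Xp i a * Xp i b = Xp i (a + b) := by
  simp [Xp, AddMonoidAlgebra.single_mul_single, ← Finsupp.single_add]

lemma Xp_zero (i : Fin 3) : Xp i 0 = 1 := by
  simp [Xp, AddMonoidAlgebra.one_def]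

lemma Xp_inv (i : Fin 3) : Xp i 1 * Xp i (-1) = 1 := by
  rw [Xp_mul]; norm_num [Xp_zero]

theorem unknot_augmentation_vs_Ahat
    (τ : Laur3 →+* Laur3)
    (hmu : τ (Xp 0 1) = Xp 0 (-2))
    (hlam : τ (Xp 1 1) = -(Xp 2 (-1) * Xp 1 (-1)))
    (hU : τ (Xp 2 1) = Xp 2 (-2)) :
    τ (Xp 2 1 - Xp 0 1 - Xp 1 1 + Xp 1 1 * Xp 0 1)
        = Xp 2 (-1) * Xp 1 (-1) * Xp 0 (-1) *
          (Xp 0 1 - Xp 0 (-1) - Xp 1 1 * (Xp 2 1 * Xp 0 (-1) - Xp 2 (-1) * Xp 0 1)) ∧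
    Ideal.span {τ (Xp 2 1 - Xp 0 1 - Xp 1 1 + Xp 1 1 * Xp 0 1)}
        = Ideal.span {Xp 0 1 - Xp 0 (-1) - Xp 1 1 * (Xp 2 1 * Xp 0 (-1) - Xp 2 (-1) * Xp 0 1)} := by
  have h02 : Xp 0 (-2) = Xp 0 (-1) * Xp 0 (-1) := by rw [Xp_mul]; norm_num
  have h22 : Xp 2 (-2) = Xp 2 (-1) * Xp 2 (-1) := by rw [Xp_mul]; norm_num
  have hA := Xp_inv 0
  have hB := Xp_inv 1
  have hC := Xp_inv 2
  have hmain : τ (Xp 2 1 - Xp 0 1 - Xp 1 1 + Xp 1 1 * Xp 0 1)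
      = Xp 2 (-1) * Xp 1 (-1) * Xp 0 (-1) *
        (Xp 0 1 - Xp 0 (-1) - Xp 1 1 * (Xp 2 1 * Xp 0 (-1) - Xp 2 (-1) * Xp 0 1)) := by
    rw [map_add, map_sub, map_sub, map_mul, hmu, hlam, hU, h02, h22]
    set A := Xp 0 1; set A' := Xp 0 (-1); set B := Xp 1 1; set B' := Xp 1 (-1)
    set C := Xp 2 1; set C' := Xp 2 (-1)
    linear_combination (-C'*B' - C'*C'*B*B') * hA + (A'*A' - C'*C') * hB + (A'*A'*B*B') * hC
  refine ⟨hmain, ?_⟩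
  set Q := Xp 0 1 - Xp 0 (-1) - Xp 1 1 * (Xp 2 1 * Xp 0 (-1) - Xp 2 (-1) * Xp 0 1) with hQ
  have hunit : (Xp 2 1 * Xp 1 1 * Xp 0 1) * (Xp 2 (-1) * Xp 1 (-1) * Xp 0 (-1)) = 1 := by
    have : (Xp 2 1 * Xp 1 1 * Xp 0 1) * (Xp 2 (-1) * Xp 1 (-1) * Xp 0 (-1))
        = (Xp 2 1 * Xp 2 (-1)) * ((Xp 1 1 * Xp 1 (-1)) * (Xp 0 1 * Xp 0 (-1))) := by ring
    rw [this, hA, hB, hC]; ring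
  apply le_antisymm
  · rw [Ideal.span_singleton_le_span_singleton, hmain]
    exact ⟨Xp 2 (-1) * Xp 1 (-1) * Xp 0 (-1), by ring⟩
  · rw [Ideal.span_singleton_le_span_singleton, hmain]
    exact ⟨Xp 2 1 * Xp 1 1 * Xp 0 1, by
      calc Q = ((Xp 2 1 * Xp 1 1 * Xp 0 1) * (Xp 2 (-1) * Xp 1 (-1) * Xp 0 (-1))) * Q := by
              rw [hunit, one_mul]
        _ = Xp 2 (-1) * Xp 1 (-1) * Xp 0 (-1) * Q * (Xp 2 1 * Xp 1 1 * Xp 0 1) := by ring⟩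

end
end

section
/- For every k with 1 ≤ k ≤ n−1, the map φ_{σ_k} is bijective; that is, φ_{σ_k} is an R₀-algebra automorphism of the polynomial ring F. (Hence the assignments φ_{σ_k} generate an action on F by ring automorphisms.) -/
/-!
STATEMENT 5: For every `k` with `1 ≤ k ≤ n−1`, the braid endomorphism `φ_{σ_k}` of the
polynomial ring `F` is bijective, i.e. it is an `R₀`-algebra automorphism.

Here `R₀ = ℂ[μ^{±1}, λ^{±1}, U^{±1}]` is the Laurent polynomial ring in three variables,
modeled as `AddMonoidAlgebra ℂ (Fin 3 →₀ ℤ)`, and `F` is the polynomial ring over `R₀`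
in the variables `a_{ij}`, `i ≠ j ∈ Fin n` (we use 0-indexing, so `σ_k` corresponds to the
pair `(k, k+1)` of elements of `Fin n` with `k + 1 < n`).
-/

noncomputable section

/-- The Laurent polynomial ring `R₀ = ℂ[μ^{±1}, λ^{±1}, U^{±1}]`. -/
abbrev R0 : Type := AddMonoidAlgebra ℂ (Fin 3 →₀ ℤ)

/-- The index set of the variables `a_{ij}`, `i ≠ j`. -/
abbrev Vars (n : ℕ) := {p : Fin n × Fin n // p.1 ≠ p.2}

/-- The polynomial ring `F` over `R₀` in the variables `a_{ij}`. -/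
abbrev Fpoly (n : ℕ) := MvPolynomial (Vars n) R0

/-- The generator `a_{ij}` (junk value `0` if `i = j`; all uses below have `i ≠ j`). -/
def av (n : ℕ) (i j : Fin n) : Fpoly n :=
  if h : i ≠ j then MvPolynomial.X ⟨(i, j), h⟩ else 0

/-- The image of the generator `a_{ij}` under `φ_{σ_k}`, where `K, K1` stand for the
strands `k, k+1`:  `a_{ij} ↦ a_{ij}` if `i,j ∉ {k,k+1}`; `a_{k+1,i} ↦ a_{k,i}` and
`a_{i,k+1} ↦ a_{i,k}` for `i ∉ {k,k+1}`; `a_{k,k+1} ↦ −a_{k+1,k}`; `a_{k+1,k} ↦ −a_{k,k+1}`;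
`a_{k,i} ↦ a_{k+1,i} − a_{k+1,k}·a_{k,i}` and `a_{i,k} ↦ a_{i,k+1} − a_{i,k}·a_{k,k+1}`
for `i ∉ {k,k+1}`. -/
def phiGen (n : ℕ) (K K1 : Fin n) (i j : Fin n) : Fpoly n :=
  if i = K ∧ j = K1 then -(av n K1 K)
  else if i = K1 ∧ j = K then -(av n K K1)
  else if i = K then av n K1 j - av n K1 K * av n K j
  else if i = K1 then av n K j
  else if j = K then av n i K1 - av n i K * av n K K1
  else if j = K1 then av n i K
  else av n i j

/-- The `R₀`-algebra endomorphism `φ_{σ_k}` of `F`. -/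
def phi (n : ℕ) (K K1 : Fin n) : Fpoly n →ₐ[R0] Fpoly n :=
  MvPolynomial.aeval fun v => phiGen n K K1 v.1.1 v.1.2

lemma phi_X (n : ℕ) (K K1 : Fin n) (v : Vars n) :
    phi n K K1 (MvPolynomial.X v) = phiGen n K K1 v.1.1 v.1.2 := by
  simp [phi]

lemma phi_av' (n : ℕ) (K K1 i j : Fin n) :
    phi n K K1 (av n i j) = if i ≠ j then phiGen n K K1 i j else 0 := by
  by_cases h : i ≠ j
  · rw [av, dif_pos h, phi_X, if_pos h]
  · rw [av, dif_neg h, if_neg h, map_zero]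

lemma phi_phi (n : ℕ) (K K1 : Fin n) (hK : K ≠ K1) (i j : Fin n) (hij : i ≠ j) :
    phi n K K1 (phiGen n K1 K i j) = av n i j := by
  have hK' : K1 ≠ K := hK.symm
  by_cases hiK : i = K <;> by_cases hiK1 : i = K1 <;>
    by_cases hjK : j = K <;> by_cases hjK1 : j = K1 <;>
    first
      | (exfalso; subst_vars; simp_all; done)
      | (subst_vars
         simp only [phiGen, map_sub, map_mul, map_neg]
         simp_all [eq_comm]
         simp only [phi_av', phiGen]
         simp_all [eq_comm]
         try ring)

lemma phi_comp_id (n : ℕ) (K K1 : Fin n) (hK : K ≠ K1) (x : Fpoly n) :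
    phi n K K1 (phi n K1 K x) = x := by
  have h : (phi n K K1).comp (phi n K1 K) = AlgHom.id R0 (Fpoly n) := by
    apply MvPolynomial.algHom_ext
    intro v
    rw [AlgHom.comp_apply, phi_X, AlgHom.id_apply, phi_phi n K K1 hK v.1.1 v.1.2 v.2]
    rw [av, dif_pos v.2]
  calc phi n K K1 (phi n K1 K x) = ((phi n K K1).comp (phi n K1 K)) x := rfl
    _ = x := by rw [h]; rfl

/-- `φ_{σ_k}` is bijective, hence an `R₀`-algebra automorphism of `F`. -/
theorem phi_bijective (n : ℕ) (hn : 2 ≤ n) (k : ℕ) (hk : k + 1 < n) :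
    Function.Bijective (phi n ⟨k, by omega⟩ ⟨k + 1, hk⟩) := by
  have hK : (⟨k, by omega⟩ : Fin n) ≠ ⟨k + 1, hk⟩ := by
    simp [Fin.ext_iff]
  exact ⟨Function.LeftInverse.injective (g := phi n ⟨k + 1, hk⟩ ⟨k, by omega⟩)
      (fun x => phi_comp_id n _ _ hK.symm x),
    Function.RightInverse.surjective (g := phi n ⟨k + 1, hk⟩ ⟨k, by omega⟩)
      (fun x => phi_comp_id n _ _ hK x)⟩

end
end

section
/- For every positive braid word w on n strands and all i, j ∈ {1,…,n}, the matrix entry (Φ^L_w)_{ij} lies in the ℤ-linear span of path monomials from π(w)(i) to j, and the entry (Φ^R_w)_{ij} lies in the ℤ-linear span of path monomials from i to π(w)(j). -/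
/-!
STATEMENT 8: For every positive braid word `w` on `n` strands and all `i, j`, the entry
`(Φ^L_w)_{ij}` lies in the `ℤ`-linear span of path monomials from `π(w)(i)` to `j`, and
`(Φ^R_w)_{ij}` lies in the `ℤ`-linear span of path monomials from `i` to `π(w)(j)`.

Setup as in the paper (0-indexed): `R₀ = ℂ[μ^{±1}, λ^{±1}, U^{±1}]` (modeled as
`AddMonoidAlgebra ℂ (Fin 3 →₀ ℤ)`), `F` is the polynomial ring over `R₀` in the
variables `a_{ij}`, `i ≠ j ∈ Fin n`; a positive braid word is a list of generator
indices `k` with `k + 1 < n`, with permutation `π(w) = s_{k₁} ∘ ⋯ ∘ s_{k_ℓ}`.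
-/

noncomputable section

/-- The permutation `π(w) = s_{k₁} ∘ ⋯ ∘ s_{k_ℓ}` of a positive braid word. -/
def permWord (n : ℕ) : List {k : ℕ // k + 1 < n} → Equiv.Perm (Fin n)
  | [] => 1
  | k :: w => Equiv.swap ⟨k.1, by have := k.2; omega⟩ ⟨k.1 + 1, k.2⟩ * permWord n w

/-- The matrix `Φ^L_{σ_k}`. -/
def PhiLgen (n : ℕ) (K K1 : Fin n) : Matrix (Fin n) (Fin n) (Fpoly n) :=
  Matrix.of fun i j =>
    if i = K ∧ j = K then -(av n K1 K)
    else if i = K ∧ j = K1 then 1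
    else if i = K1 ∧ j = K then 1
    else if i = K1 ∧ j = K1 then 0
    else if i = j then 1 else 0

/-- The matrix `Φ^R_{σ_k}`. -/
def PhiRgen (n : ℕ) (K K1 : Fin n) : Matrix (Fin n) (Fin n) (Fpoly n) :=
  Matrix.of fun i j =>
    if i = K ∧ j = K then -(av n K K1)
    else if i = K ∧ j = K1 then 1
    else if i = K1 ∧ j = K then 1
    else if i = K1 ∧ j = K1 then 0
    else if i = j then 1 else 0

/-- `Φ^L` of the empty word is the identity, and `Φ^L_{σ_k w'} = φ_{σ_k}(Φ^L_{w'})·Φ^L_{σ_k}`. -/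
def PhiL (n : ℕ) : List {k : ℕ // k + 1 < n} → Matrix (Fin n) (Fin n) (Fpoly n)
  | [] => 1
  | k :: w =>
      (PhiL n w).map (phi n ⟨k.1, by have := k.2; omega⟩ ⟨k.1 + 1, k.2⟩) *
        PhiLgen n ⟨k.1, by have := k.2; omega⟩ ⟨k.1 + 1, k.2⟩

/-- `Φ^R` of the empty word is the identity, and `Φ^R_{σ_k w'} = Φ^R_{σ_k}·φ_{σ_k}(Φ^R_{w'})`. -/
def PhiR (n : ℕ) : List {k : ℕ // k + 1 < n} → Matrix (Fin n) (Fin n) (Fpoly n)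
  | [] => 1
  | k :: w =>
      PhiRgen n ⟨k.1, by have := k.2; omega⟩ ⟨k.1 + 1, k.2⟩ *
        (PhiR n w).map (phi n ⟨k.1, by have := k.2; omega⟩ ⟨k.1 + 1, k.2⟩)

/-- The product `a_{i c₀}·a_{c₀ c₁}·⋯` along a chain of indices. -/
def pathProd (n : ℕ) : Fin n → List (Fin n) → Fpoly n
  | _, [] => 1
  | i, c :: rest => av n i c * pathProd n c rest

/-- Consecutive entries of the chain (starting at `i`) are distinct. -/
def chainOK (n : ℕ) : Fin n → List (Fin n) → Prop
  | _, [] => True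
  | i, c :: rest => i ≠ c ∧ chainOK n c rest

/-- The set of path monomials from `i` to `j` in `F`. -/
def pathMonomials (n : ℕ) (i j : Fin n) : Set (Fpoly n) :=
  {x | ∃ l : List (Fin n), chainOK n i l ∧ l.getLastD i = j ∧ x = pathProd n i l}

lemma one_mem_PM (n : ℕ) (i : Fin n) : (1 : Fpoly n) ∈ pathMonomials n i i :=
  ⟨[], trivial, rfl, rfl⟩

lemma av_mem_PM {n : ℕ} {i j : Fin n} (h : i ≠ j) : av n i j ∈ pathMonomials n i j :=
  ⟨[j], ⟨h, trivial⟩, rfl, by simp [pathProd]⟩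

lemma PM_append {n : ℕ} {b c : Fin n} (l' : List (Fin n)) (h1 : chainOK n b l')
    (h2 : l'.getLastD b = c) :
    ∀ (l : List (Fin n)) (a : Fin n), chainOK n a l → l.getLastD a = b →
      chainOK n a (l ++ l') ∧ (l ++ l').getLastD a = c ∧
        pathProd n a (l ++ l') = pathProd n a l * pathProd n b l' := by
  intro l
  induction l with
  | nil =>
    intro a _ hb
    simp only [List.getLastD_nil] at hb
    subst hb
    exact ⟨h1, h2, by simp [pathProd]⟩
  | cons c0 rest ih =>
    intro a hc hb
    obtain ⟨hac0, hrest⟩ := hc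
    simp only [List.getLastD_cons] at hb
    obtain ⟨h3, h4, h5⟩ := ih c0 hrest hb
    refine ⟨⟨hac0, h3⟩, ?_, ?_⟩
    · show (c0 :: (rest ++ l')).getLastD a = c
      rw [List.getLastD_cons]; exact h4
    show av n a c0 * pathProd n c0 (rest ++ l') =
      av n a c0 * pathProd n c0 rest * pathProd n b l'
    rw [h5, mul_assoc]

lemma PM_mul {n : ℕ} {a b c : Fin n} {x y : Fpoly n} (hx : x ∈ pathMonomials n a b)
    (hy : y ∈ pathMonomials n b c) : x * y ∈ pathMonomials n a c := by
  obtain ⟨l, hl1, hl2, rfl⟩ := hx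
  obtain ⟨l', hl'1, hl'2, rfl⟩ := hy
  obtain ⟨h1, h2, h3⟩ := PM_append l' hl'1 hl'2 l a hl1 hl2
  exact ⟨l ++ l', h1, h2, h3.symm⟩

lemma span_PM_mul {n : ℕ} {a b c : Fin n} {x y : Fpoly n}
    (hx : x ∈ Submodule.span ℤ (pathMonomials n a b))
    (hy : y ∈ Submodule.span ℤ (pathMonomials n b c)) :
    x * y ∈ Submodule.span ℤ (pathMonomials n a c) := by
  have h := Submodule.mul_mem_mul hx hy
  rw [Submodule.span_mul_span] at h
  refine Submodule.span_mono ?_ h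
  rintro z ⟨u, hu, v, hv, rfl⟩
  exact PM_mul hu hv

lemma av_mem_span {n : ℕ} {i j : Fin n} (h : i ≠ j) :
    av n i j ∈ Submodule.span ℤ (pathMonomials n i j) :=
  Submodule.subset_span (av_mem_PM h)

lemma one_mem_span {n : ℕ} (i : Fin n) :
    (1 : Fpoly n) ∈ Submodule.span ℤ (pathMonomials n i i) :=
  Submodule.subset_span (one_mem_PM n i)

lemma phi_av {n : ℕ} (K K1 : Fin n) {a b : Fin n} (h : a ≠ b) :
    phi n K K1 (av n a b) = phiGen n K K1 a b := by
  simp [phi, av, h]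

lemma phiGen_mem {n : ℕ} {K K1 a b : Fin n} (hK : K ≠ K1) (hab : a ≠ b) :
    phiGen n K K1 a b ∈
      Submodule.span ℤ (pathMonomials n (Equiv.swap K K1 a) (Equiv.swap K K1 b)) := by
  unfold phiGen
  split_ifs with h1 h2 h3 h4 h5 h6
  · obtain ⟨rfl, rfl⟩ := h1
    rw [Equiv.swap_apply_left, Equiv.swap_apply_right]
    exact neg_mem (av_mem_span hK.symm)
  · obtain ⟨rfl, rfl⟩ := h2
    rw [Equiv.swap_apply_right, Equiv.swap_apply_left]
    exact neg_mem (av_mem_span hK)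
  · subst h3
    have hbK1 : b ≠ K1 := fun h => h1 ⟨rfl, h⟩
    rw [Equiv.swap_apply_left, Equiv.swap_apply_of_ne_of_ne hab.symm hbK1]
    exact sub_mem (av_mem_span (Ne.symm hbK1)) (span_PM_mul (av_mem_span hK.symm)
      (av_mem_span hab))
  · subst h4
    have hbK : b ≠ K := fun h => h2 ⟨rfl, h⟩
    rw [Equiv.swap_apply_right, Equiv.swap_apply_of_ne_of_ne hbK hab.symm]
    exact av_mem_span (Ne.symm hbK)
  · subst h5
    have haK1 : a ≠ K1 := h4
    rw [Equiv.swap_apply_left, Equiv.swap_apply_of_ne_of_ne hab haK1]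
    exact sub_mem (av_mem_span haK1) (span_PM_mul (av_mem_span hab) (av_mem_span hK))
  · subst h6
    rw [Equiv.swap_apply_right, Equiv.swap_apply_of_ne_of_ne h3 hab]
    exact av_mem_span h3
  · rw [Equiv.swap_apply_of_ne_of_ne h3 h4, Equiv.swap_apply_of_ne_of_ne h5 h6]
    exact av_mem_span hab

lemma phi_pathProd {n : ℕ} {K K1 : Fin n} (hK : K ≠ K1) :
    ∀ (l : List (Fin n)) (a : Fin n), chainOK n a l →
      phi n K K1 (pathProd n a l) ∈
        Submodule.span ℤ
          (pathMonomials n (Equiv.swap K K1 a) (Equiv.swap K K1 (l.getLastD a))) := by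
  intro l
  induction l with
  | nil =>
    intro a _
    show phi n K K1 1 ∈ _
    rw [map_one]
    exact one_mem_span _
  | cons c rest ih =>
    intro a hc
    obtain ⟨hac, hrest⟩ := hc
    show phi n K K1 (av n a c * pathProd n c rest) ∈ _
    rw [map_mul]
    simp only [List.getLastD_cons]
    refine span_PM_mul ?_ (ih c hrest)
    rw [phi_av _ _ hac]
    exact phiGen_mem hK hac

lemma phi_span {n : ℕ} {K K1 a b : Fin n} (hK : K ≠ K1) {x : Fpoly n}
    (hx : x ∈ Submodule.span ℤ (pathMonomials n a b)) :
    phi n K K1 x ∈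
      Submodule.span ℤ (pathMonomials n (Equiv.swap K K1 a) (Equiv.swap K K1 b)) := by
  induction hx using Submodule.span_induction with
  | mem y hy =>
    obtain ⟨l, h1, h2, rfl⟩ := hy
    subst h2
    exact phi_pathProd hK l a h1
  | zero => simp
  | add u v _ _ hu hv => rw [map_add]; exact add_mem hu hv
  | smul r u _ hu => rw [map_zsmul]; exact Submodule.smul_mem _ _ hu

lemma PhiLgen_mem {n : ℕ} {K K1 : Fin n} (hK : K ≠ K1) (m j : Fin n) :
    PhiLgen n K K1 m j ∈ Submodule.span ℤ (pathMonomials n (Equiv.swap K K1 m) j) := by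
  unfold PhiLgen
  rw [Matrix.of_apply]
  split_ifs with h1 h2 h3 h4 h5
  · obtain ⟨rfl, rfl⟩ := h1
    rw [Equiv.swap_apply_left]
    exact neg_mem (av_mem_span hK.symm)
  · obtain ⟨rfl, rfl⟩ := h2
    rw [Equiv.swap_apply_left]
    exact one_mem_span _
  · obtain ⟨rfl, rfl⟩ := h3
    rw [Equiv.swap_apply_right]
    exact one_mem_span _
  · exact Submodule.zero_mem _
  · subst h5
    have hmK : m ≠ K := fun h => h1 ⟨h, h⟩
    have hmK1 : m ≠ K1 := fun h => h4 ⟨h, h⟩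
    rw [Equiv.swap_apply_of_ne_of_ne hmK hmK1]
    exact one_mem_span _
  · exact Submodule.zero_mem _

lemma PhiRgen_mem {n : ℕ} {K K1 : Fin n} (hK : K ≠ K1) (i m : Fin n) :
    PhiRgen n K K1 i m ∈ Submodule.span ℤ (pathMonomials n i (Equiv.swap K K1 m)) := by
  unfold PhiRgen
  rw [Matrix.of_apply]
  split_ifs with h1 h2 h3 h4 h5
  · obtain ⟨rfl, rfl⟩ := h1
    rw [Equiv.swap_apply_left]
    exact neg_mem (av_mem_span hK)
  · obtain ⟨rfl, rfl⟩ := h2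
    rw [Equiv.swap_apply_right]
    exact one_mem_span _
  · obtain ⟨rfl, rfl⟩ := h3
    rw [Equiv.swap_apply_left]
    exact one_mem_span _
  · exact Submodule.zero_mem _
  · subst h5
    have hmK : i ≠ K := fun h => h1 ⟨h, h⟩
    have hmK1 : i ≠ K1 := fun h => h4 ⟨h, h⟩
    rw [Equiv.swap_apply_of_ne_of_ne hmK hmK1]
    exact one_mem_span _
  · exact Submodule.zero_mem _

/-- The entries of `Φ^L_w` and `Φ^R_w` are `ℤ`-linear combinations of path monomials
from `π(w)(i)` to `j`, resp. from `i` to `π(w)(j)`. -/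
theorem PhiL_PhiR_entries_pathMonomials (n : ℕ) (hn : 2 ≤ n)
    (w : List {k : ℕ // k + 1 < n}) (i j : Fin n) :
    PhiL n w i j ∈ Submodule.span ℤ (pathMonomials n (permWord n w i) j) ∧
    PhiR n w i j ∈ Submodule.span ℤ (pathMonomials n i (permWord n w j)) := by
  induction w generalizing i j with
  | nil =>
    have hid : ∀ a b : Fin n, (1 : Matrix (Fin n) (Fin n) (Fpoly n)) a b ∈
        Submodule.span ℤ (pathMonomials n a b) := by
      intro a b
      rw [Matrix.one_apply]
      split_ifs with h
      · subst h; exact one_mem_span _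
      · exact Submodule.zero_mem _
    simp only [PhiL, PhiR, permWord, Equiv.Perm.one_apply]
    exact ⟨hid i j, hid i j⟩
  | cons k w ih =>
    have hk := k.2
    set K : Fin n := ⟨k.1, by omega⟩ with hKdef
    set K1 : Fin n := ⟨k.1 + 1, hk⟩ with hK1def
    have hK : K ≠ K1 := by
      intro h
      have := congrArg Fin.val h
      simp [hKdef, hK1def] at this
    have hperm : ∀ a : Fin n, permWord n (k :: w) a =
        Equiv.swap K K1 (permWord n w a) := fun a => rfl
    constructor
    · show ((PhiL n w).map (phi n K K1) * PhiLgen n K K1) i j ∈ _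
      rw [Matrix.mul_apply, hperm]
      refine Submodule.sum_mem _ fun m _ => ?_
      rw [Matrix.map_apply]
      exact span_PM_mul (phi_span hK (ih i m).1) (PhiLgen_mem hK m j)
    · show (PhiRgen n K K1 * (PhiR n w).map (phi n K K1)) i j ∈ _
      rw [Matrix.mul_apply, hperm]
      refine Submodule.sum_mem _ fun m _ => ?_
      rw [Matrix.map_apply]
      exact span_PM_mul (PhiRgen_mem hK i m) (phi_span hK (ih m j).2)

end
end
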